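/- arXiv:2012.10799 — 11 statements merged into one kernel-verified Lean document; each statement's English description precedes it below -/
import Mathlib

section
/- Let R be a commutative ring and c ∈ R. Suppose (x0,x1,x2,x3) and (y0,y1,y2,y3) both satisfy the split μ4-normal form equations with parameter c. Then, for each ℓ ∈ {0,1,2,3}, the 4-tuple s_ℓ((x0,x1,x2,x3),(y0,y1,y2,y3)) again satisfies the split μ4-normal form equations with parameter c. -/
/-!
All four laws are one law up to symmetry. The signed coordinate permutations
`ρ = rotate` and `τ = swapHalves` preserve the curve, and substituting them for the
second point shifts the index of the law `s_ℓ = addLawℓ`: `s₀(x, ρy) = ρ s₁(x, y)`,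
`s₂(x, ρy) = ρ s₃(x, y)` and `s₂(x, τy) = τ s₀(x, y)`. So it suffices to treat the
diagonal law `s₂`, written in `A = U₀₀, B = U₁₁, C = U₂₂, D = U₃₃`. Its second equation
is the identity `(AB - CD)² - (AD - BC)² = (A² - C²)(B² - D²)`. For the first, expand
`(A² - C²)²` by `sq_mul_sub_mul_sq` with `aᵢ = xᵢ², bᵢ = yᵢ²`: the curve equations turn
the correction terms `b₀b₂(a₀ - a₂)² + a₀a₂(b₀ - b₂)²` into
`c⁴((x₁x₃y₀y₂)² + (x₀x₂y₁y₃)²)`, which is also the correction term for `(B² - D²)²`.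
It cancels in the difference, and the main terms leave `c⁴(AB - CD)(AD - BC)`.
-/

/-- A point of `R⁴` satisfies the split μ4-normal form equations with parameter `c`. -/
def SplitMu4 {R : Type*} [CommRing R] (c : R) (p : R × R × R × R) : Prop :=
  p.1 ^ 2 - p.2.2.1 ^ 2 = c ^ 2 * (p.2.1 * p.2.2.2) ∧
  p.2.1 ^ 2 - p.2.2.2 ^ 2 = c ^ 2 * (p.1 * p.2.2.1)

theorem sq_mul_sub_mul_sq {R : Type*} [CommRing R] (a₀ b₀ a₂ b₂ : R) :
    (a₀ * b₀ - a₂ * b₂) ^ 2 =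
      (a₀ - a₂) * (b₀ - b₂) * (a₀ * b₀ + a₂ * b₂) + b₀ * b₂ * (a₀ - a₂) ^ 2 +
        a₀ * a₂ * (b₀ - b₂) ^ 2 := by
  ring

namespace SplitMu4

variable {R : Type*} [CommRing R] {c : R}

theorem mk_iff {p₀ p₁ p₂ p₃ : R} :
    SplitMu4 c (p₀, p₁, p₂, p₃) ↔
      p₀ ^ 2 - p₂ ^ 2 = c ^ 2 * (p₁ * p₃) ∧ p₁ ^ 2 - p₃ ^ 2 = c ^ 2 * (p₀ * p₂) :=
  Iff.rfl

def rotate : R × R × R × R → R × R × R × R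
  | (p₀, p₁, p₂, p₃) => (p₁, p₂, -p₃, p₀)

def swapHalves : R × R × R × R → R × R × R × R
  | (p₀, p₁, p₂, p₃) => (-p₂, -p₃, p₀, p₁)

theorem rotate_iff {p : R × R × R × R} : SplitMu4 c (rotate p) ↔ SplitMu4 c p := by
  obtain ⟨p₀, p₁, p₂, p₃⟩ := p
  simp only [rotate, mk_iff]
  constructor <;> rintro ⟨h₁, h₂⟩ <;> constructor
  · linear_combination -h₂
  · linear_combination h₁
  · linear_combination h₂
  · linear_combination -h₁

theorem swapHalves_iff {p : R × R × R × R} : SplitMu4 c (swapHalves p) ↔ SplitMu4 c p := by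
  obtain ⟨p₀, p₁, p₂, p₃⟩ := p
  simp only [swapHalves, mk_iff]
  constructor <;> rintro ⟨h₁, h₂⟩ <;> constructor
  · linear_combination -h₁
  · linear_combination -h₂
  · linear_combination -h₁
  · linear_combination -h₂

variable (c)

def addLaw0 : R × R × R × R → R × R × R × R → R × R × R × R
  | (x0, x1, x2, x3), (y0, y1, y2, y3) =>
    ((x1 * y3) ^ 2 - (x3 * y1) ^ 2,
     c * ((x1 * y3) * (x2 * y0) - (x3 * y1) * (x0 * y2)),
     (x2 * y0) ^ 2 - (x0 * y2) ^ 2,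
     c * ((x2 * y0) * (x3 * y1) - (x1 * y3) * (x0 * y2)))

def addLaw1 : R × R × R × R → R × R × R × R → R × R × R × R
  | (x0, x1, x2, x3), (y0, y1, y2, y3) =>
    (c * ((x0 * y3) * (x1 * y0) + (x2 * y1) * (x3 * y2)),
     (x1 * y0) ^ 2 - (x3 * y2) ^ 2,
     c * ((x0 * y3) * (x3 * y2) + (x1 * y0) * (x2 * y1)),
     (x0 * y3) ^ 2 - (x2 * y1) ^ 2)

def addLaw2 : R × R × R × R → R × R × R × R → R × R × R × R
  | (x0, x1, x2, x3), (y0, y1, y2, y3) =>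
    ((x0 * y0) ^ 2 - (x2 * y2) ^ 2,
     c * ((x0 * y0) * (x1 * y1) - (x2 * y2) * (x3 * y3)),
     (x1 * y1) ^ 2 - (x3 * y3) ^ 2,
     c * ((x0 * y0) * (x3 * y3) - (x1 * y1) * (x2 * y2)))

def addLaw3 : R × R × R × R → R × R × R × R → R × R × R × R
  | (x0, x1, x2, x3), (y0, y1, y2, y3) =>
    (c * ((x0 * y1) * (x3 * y0) + (x1 * y2) * (x2 * y3)),
     (x0 * y1) ^ 2 - (x2 * y3) ^ 2,
     c * ((x0 * y1) * (x1 * y2) + (x2 * y3) * (x3 * y0)),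
     (x3 * y0) ^ 2 - (x1 * y2) ^ 2)

theorem addLaw0_rotate (x y : R × R × R × R) :
    addLaw0 c x (rotate y) = rotate (addLaw1 c x y) := by
  obtain ⟨x0, x1, x2, x3⟩ := x
  obtain ⟨y0, y1, y2, y3⟩ := y
  dsimp only [addLaw0, addLaw1, rotate]
  ext <;> ring

theorem addLaw2_rotate (x y : R × R × R × R) :
    addLaw2 c x (rotate y) = rotate (addLaw3 c x y) := by
  obtain ⟨x0, x1, x2, x3⟩ := x
  obtain ⟨y0, y1, y2, y3⟩ := y
  dsimp only [addLaw2, addLaw3, rotate]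
  ext <;> ring

theorem addLaw2_swapHalves (x y : R × R × R × R) :
    addLaw2 c x (swapHalves y) = swapHalves (addLaw0 c x y) := by
  obtain ⟨x0, x1, x2, x3⟩ := x
  obtain ⟨y0, y1, y2, y3⟩ := y
  dsimp only [addLaw2, addLaw0, swapHalves]
  ext <;> ring

variable {c}

theorem sq_sub_sq_diag_sq {x0 x1 x2 x3 y0 y1 y2 y3 : R}
    (hx : x0 ^ 2 - x2 ^ 2 = c ^ 2 * (x1 * x3)) (hy : y0 ^ 2 - y2 ^ 2 = c ^ 2 * (y1 * y3)) :
    ((x0 * y0) ^ 2 - (x2 * y2) ^ 2) ^ 2 =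
      c ^ 4 * ((x1 * y1) * (x3 * y3) * ((x0 * y0) ^ 2 + (x2 * y2) ^ 2) +
        (x1 * x3 * y0 * y2) ^ 2 + (x0 * x2 * y1 * y3) ^ 2) := by
  have h := sq_mul_sub_mul_sq (x0 ^ 2) (y0 ^ 2) (x2 ^ 2) (y2 ^ 2)
  rw [hx, hy] at h
  linear_combination h

theorem addLaw2_mem {x y : R × R × R × R} (hx : SplitMu4 c x) (hy : SplitMu4 c y) :
    SplitMu4 c (addLaw2 c x y) := by
  obtain ⟨x0, x1, x2, x3⟩ := x
  obtain ⟨y0, y1, y2, y3⟩ := y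
  obtain ⟨hx02, hx13⟩ := mk_iff.mp hx
  obtain ⟨hy02, hy13⟩ := mk_iff.mp hy
  simp only [addLaw2, mk_iff]
  constructor
  · linear_combination sq_sub_sq_diag_sq hx02 hy02 - sq_sub_sq_diag_sq hx13 hy13
  · ring

theorem addLaw0_mem {x y : R × R × R × R} (hx : SplitMu4 c x) (hy : SplitMu4 c y) :
    SplitMu4 c (addLaw0 c x y) :=
  swapHalves_iff.mp (addLaw2_swapHalves c x y ▸ addLaw2_mem hx (swapHalves_iff.mpr hy))

theorem addLaw1_mem {x y : R × R × R × R} (hx : SplitMu4 c x) (hy : SplitMu4 c y) :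
    SplitMu4 c (addLaw1 c x y) :=
  rotate_iff.mp (addLaw0_rotate c x y ▸ addLaw0_mem hx (rotate_iff.mpr hy))

theorem addLaw3_mem {x y : R × R × R × R} (hx : SplitMu4 c x) (hy : SplitMu4 c y) :
    SplitMu4 c (addLaw3 c x y) :=
  rotate_iff.mp (addLaw2_rotate c x y ▸ addLaw2_mem hx (rotate_iff.mpr hy))

end SplitMu4

/-- Each of the four addition laws `s₀, s₁, s₂, s₃` maps pairs of points of the
split μ4-normal form curve to points of the curve.  Here `U_{jk} = x_j·y_k`. -/
theorem addition_laws_on_curve {R : Type*} [CommRing R]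
    (c x0 x1 x2 x3 y0 y1 y2 y3 : R)
    (hx : SplitMu4 c (x0, x1, x2, x3)) (hy : SplitMu4 c (y0, y1, y2, y3)) :
    SplitMu4 c
      ((x1 * y3) ^ 2 - (x3 * y1) ^ 2,
       c * ((x1 * y3) * (x2 * y0) - (x3 * y1) * (x0 * y2)),
       (x2 * y0) ^ 2 - (x0 * y2) ^ 2,
       c * ((x2 * y0) * (x3 * y1) - (x1 * y3) * (x0 * y2))) ∧
    SplitMu4 c
      (c * ((x0 * y3) * (x1 * y0) + (x2 * y1) * (x3 * y2)),
       (x1 * y0) ^ 2 - (x3 * y2) ^ 2,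
       c * ((x0 * y3) * (x3 * y2) + (x1 * y0) * (x2 * y1)),
       (x0 * y3) ^ 2 - (x2 * y1) ^ 2) ∧
    SplitMu4 c
      ((x0 * y0) ^ 2 - (x2 * y2) ^ 2,
       c * ((x0 * y0) * (x1 * y1) - (x2 * y2) * (x3 * y3)),
       (x1 * y1) ^ 2 - (x3 * y3) ^ 2,
       c * ((x0 * y0) * (x3 * y3) - (x1 * y1) * (x2 * y2))) ∧
    SplitMu4 c
      (c * ((x0 * y1) * (x3 * y0) + (x1 * y2) * (x2 * y3)),
       (x0 * y1) ^ 2 - (x2 * y3) ^ 2,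
       c * ((x0 * y1) * (x1 * y2) + (x2 * y3) * (x3 * y0)),
       (x3 * y0) ^ 2 - (x1 * y2) ^ 2) :=
  ⟨SplitMu4.addLaw0_mem hx hy, SplitMu4.addLaw1_mem hx hy, SplitMu4.addLaw2_mem hx hy,
    SplitMu4.addLaw3_mem hx hy⟩
end

section
/- Let k be a field and c ∈ k. Suppose (x0,x1,x2,x3) and (y0,y1,y2,y3) both satisfy the split μ4-normal form equations with parameter c. Then the tuples s0((x),(y)) and s2((x),(y)) are projectively proportional: for all indices i, j ∈ {0,1,2,3}, the i-th coordinate of s0 times the j-th coordinate of s2 equals the j-th coordinate of s0 times the i-th coordinate of s2. -/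
/-- The addition laws `s₀` and `s₂` on the split μ4-normal form curve give
projectively proportional 4-tuples on any pair of points of the curve. -/
theorem s0_s2_projectively_proportional {k : Type*} [Field k]
    (c x0 x1 x2 x3 y0 y1 y2 y3 : k)
    (hx1 : x0 ^ 2 - x2 ^ 2 = c ^ 2 * (x1 * x3))
    (hx2 : x1 ^ 2 - x3 ^ 2 = c ^ 2 * (x0 * x2))
    (hy1 : y0 ^ 2 - y2 ^ 2 = c ^ 2 * (y1 * y3))
    (hy2 : y1 ^ 2 - y3 ^ 2 = c ^ 2 * (y0 * y2)) :
    let S0 : Fin 4 → k :=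
      ![(x1 * y3) ^ 2 - (x3 * y1) ^ 2,
        c * ((x1 * y3) * (x2 * y0) - (x3 * y1) * (x0 * y2)),
        (x2 * y0) ^ 2 - (x0 * y2) ^ 2,
        c * ((x2 * y0) * (x3 * y1) - (x1 * y3) * (x0 * y2))]
    let S2 : Fin 4 → k :=
      ![(x0 * y0) ^ 2 - (x2 * y2) ^ 2,
        c * ((x0 * y0) * (x1 * y1) - (x2 * y2) * (x3 * y3)),
        (x1 * y1) ^ 2 - (x3 * y3) ^ 2,
        c * ((x0 * y0) * (x3 * y3) - (x1 * y1) * (x2 * y2))]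
    ∀ i j : Fin 4, S0 i * S2 j = S0 j * S2 i := by
  intro S0 S2 i j
  -- Each 2×2 minor lies in the ideal generated by the four curve equations; `grind` finds
  -- the certificate by its Gröbner-basis reasoning.
  fin_cases i <;> fin_cases j <;>
    simp only [S0, S2, Fin.zero_eta, Fin.mk_one, Fin.reduceFinMk, Fin.isValue, Matrix.cons_val] <;>
    grind
end

section
/- Let R be a commutative ring, a, r ∈ R, and ω ∈ R with ω² − ω = a. Set ω̄ = 1 − ω, δ = ω − ω̄, and D = 4a + 1. If (x0,x1,x2,x3) satisfies the μ4-normal form equations with parameter r, then the point (δ·x0, ω·x1 − ω̄·x3, x2, ω·x3 − ω̄·x1) satisfies the twisted μ4-normal form equations with parameters (r, a): X0² − D·r·X2² = X1·X3 − a·(X1 − X3)² and X1² − X3² = X0·X2. -/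
/-- The twisting map sends points of the μ4-normal form curve with parameter `r`
to points of the twisted μ4-normal form curve with parameters `(r,a)`. -/
theorem twisting_mu4 {R : Type*} [CommRing R] (a r ω : R) (hω : ω ^ 2 - ω = a)
    (x0 x1 x2 x3 : R)
    (h1 : x0 ^ 2 - r * x2 ^ 2 = x1 * x3)
    (h2 : x1 ^ 2 - x3 ^ 2 = x0 * x2) :
    let ωb := 1 - ω
    let δ := ω - ωb
    let D := 4 * a + 1
    let y0 := δ * x0
    let y1 := ω * x1 - ωb * x3
    let y2 := x2
    let y3 := ω * x3 - ωb * x1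
    y0 ^ 2 - D * r * y2 ^ 2 = y1 * y3 - a * (y1 - y3) ^ 2 ∧
    y1 ^ 2 - y3 ^ 2 = y0 * y2 := by
  subst hω
  -- With δ = 2ω - 1 one has δ² = D, y1 - y3 = x1 - x3 and y1 + y3 = δ (x1 + x3), so the first
  -- equation is δ² times the first μ4 equation and the second is δ times the second.
  exact ⟨by linear_combination (2 * ω - 1) ^ 2 * h1, by linear_combination (2 * ω - 1) * h2⟩
end

section
/- Let R be a commutative ring, a, s ∈ R, and ω ∈ R with ω² − ω = a. Set ω̄ = 1 − ω, δ = ω − ω̄, and D = 4a + 1. If (x0,x1,x2,x3) satisfies the semisplit μ4-normal form equations with parameter s, then the point (δ·x0, ω·x1 − ω̄·x3, x2, ω·x3 − ω̄·x1) satisfies the twisted semisplit μ4-normal form equations with parameters (s, a): X0² − D·X2² = X1·X3 − a·(X1 − X3)² and X1² − X3² = s·X0·X2. -/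
/-- The twisting map sends points of the semisplit μ4-normal form curve with
parameter `s` to points of the twisted semisplit μ4-normal form curve with
parameters `(s,a)`. -/
theorem twisting_semisplit_mu4 {R : Type*} [CommRing R] (a s ω : R)
    (hω : ω ^ 2 - ω = a) (x0 x1 x2 x3 : R)
    (h1 : x0 ^ 2 - x2 ^ 2 = x1 * x3)
    (h2 : x1 ^ 2 - x3 ^ 2 = s * x0 * x2) :
    let ωb := 1 - ω
    let δ := ω - ωb
    let D := 4 * a + 1
    let y0 := δ * x0
    let y1 := ω * x1 - ωb * x3
    let y2 := x2
    let y3 := ω * x3 - ωb * x1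
    y0 ^ 2 - D * y2 ^ 2 = y1 * y3 - a * (y1 - y3) ^ 2 ∧
    y1 ^ 2 - y3 ^ 2 = s * y0 * y2 := by
  subst hω
  -- Since ω + ωb = 1, we get y1 - y3 = x1 - x3 and y1 + y3 = δ (x1 + x3), and δ ^ 2 = D:
  -- the new equations are D times the first old one and δ times the second.
  exact ⟨by linear_combination (4 * (ω ^ 2 - ω) + 1) * h1,
    by linear_combination (2 * ω - 1) * h2⟩
end

section
/- Let R be a commutative ring, a, c ∈ R, and ω ∈ R with ω² − ω = a. Set ω̄ = 1 − ω, δ = ω − ω̄, and D = 4a + 1. If (x0,x1,x2,x3) satisfies the split μ4-normal form equations with parameter c, then the point (δ·x0, ω·x1 − ω̄·x3, x2, ω·x3 − ω̄·x1) satisfies the twisted split μ4-normal form equations with parameters (c, a): X0² − D·X2² = c²·(X1·X3 − a·(X1 − X3)²) and X1² − X3² = c²·X0·X2. -/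
/-!
With `δ = ω - ω̄` one has `δ² = D`, `y1 - y3 = x1 - x3` and `y1 + y3 = δ (x1 + x3)`.
Hence the substitution multiplies both sides of the first split equation by `D`
(the twisted form `y1 y3 - a (y1 - y3)²` equals `D x1 x3`) and both sides of the
second one by `δ`.
-/

section Twist

variable {R : Type*} [CommRing R] {a : R} (ω : R)

theorem twist_delta_sq (hω : ω ^ 2 - ω = a) : (ω - (1 - ω)) ^ 2 = 4 * a + 1 := by
  linear_combination 4 * hω

theorem twist_mul_sub_mul_sub_sq (hω : ω ^ 2 - ω = a) (x1 x3 : R) :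
    (ω * x1 - (1 - ω) * x3) * (ω * x3 - (1 - ω) * x1) -
        a * ((ω * x1 - (1 - ω) * x3) - (ω * x3 - (1 - ω) * x1)) ^ 2 =
      (4 * a + 1) * (x1 * x3) := by
  linear_combination (x1 + x3) ^ 2 * hω

theorem twist_sq_sub_sq (x1 x3 : R) :
    (ω * x1 - (1 - ω) * x3) ^ 2 - (ω * x3 - (1 - ω) * x1) ^ 2 =
      (ω - (1 - ω)) * (x1 ^ 2 - x3 ^ 2) := by
  ring

end Twist

/-- The twisting map sends points of the split μ4-normal form curve with
parameter `c` to points of the twisted split μ4-normal form curve with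
parameters `(c,a)`. -/
theorem twisting_split_mu4 {R : Type*} [CommRing R] (a c ω : R)
    (hω : ω ^ 2 - ω = a) (x0 x1 x2 x3 : R)
    (h1 : x0 ^ 2 - x2 ^ 2 = c ^ 2 * (x1 * x3))
    (h2 : x1 ^ 2 - x3 ^ 2 = c ^ 2 * (x0 * x2)) :
    let ωb := 1 - ω
    let δ := ω - ωb
    let D := 4 * a + 1
    let y0 := δ * x0
    let y1 := ω * x1 - ωb * x3
    let y2 := x2
    let y3 := ω * x3 - ωb * x1
    y0 ^ 2 - D * y2 ^ 2 = c ^ 2 * (y1 * y3 - a * (y1 - y3) ^ 2) ∧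
    y1 ^ 2 - y3 ^ 2 = c ^ 2 * (y0 * y2) := by
  refine ⟨?_, ?_⟩
  · linear_combination x0 ^ 2 * twist_delta_sq ω hω + (4 * a + 1) * h1 -
      c ^ 2 * twist_mul_sub_mul_sub_sq ω hω x1 x3
  · linear_combination twist_sq_sub_sq ω x1 x3 + (ω - (1 - ω)) * h2
end

section
/- Let R be a commutative ring, r, a ∈ R, D = 4a + 1. Suppose (x0,x1,x2,x3) satisfies the twisted μ4-normal form equations with parameters (r,a). Define (y0,y1,y2,y3) = (4·x0, 2·(x1 − x3), 2·(x1 + x3), x2). Then: (1) y0² − 16·D·r·y3² = −D·y1² + y2² (the twisted Edwards equation with parameters (−D, −16Dr)); (2) y0·y3 = y1·y2 (the extended Edwards coordinate relation); (3) applying the inverse map (Y0,Y1,Y2,Y3) ↦ (Y0, Y1 + Y2, 4·Y3, −Y1 + Y2) to (y0,y1,y2,y3) yields (4·x0, 4·x1, 4·x2, 4·x3), i.e. 4 times the original point. -/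
section TwistedMu4

variable {R : Type*} [CommRing R]

/-- The quadratic part `x1 x3 - a (x1 - x3)²` of the μ4-equation becomes the diagonal form
`-D u² + v²` in `u = 2 (x1 - x3)`, `v = 2 (x1 + x3)`, since `v² - u² = 16 x1 x3`. -/
theorem twistedEdwards_eq_of_twistedMu4_eq {r a x0 x1 x2 x3 : R}
    (h : x0 ^ 2 - (4 * a + 1) * r * x2 ^ 2 = x1 * x3 - a * (x1 - x3) ^ 2) :
    (4 * x0) ^ 2 - 16 * (4 * a + 1) * r * x2 ^ 2
      = -(4 * a + 1) * (2 * (x1 - x3)) ^ 2 + (2 * (x1 + x3)) ^ 2 := by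
  linear_combination 16 * h

theorem extendedEdwards_rel_of_twistedMu4_rel {x0 x1 x2 x3 : R}
    (h : x1 ^ 2 - x3 ^ 2 = x0 * x2) :
    4 * x0 * x2 = 2 * (x1 - x3) * (2 * (x1 + x3)) := by
  linear_combination (-4) * h

theorem edwardsToMu4_mu4ToEdwards (x0 x1 x2 x3 : R) :
    ((4 * x0, 2 * (x1 - x3) + 2 * (x1 + x3), 4 * x2, -(2 * (x1 - x3)) + 2 * (x1 + x3)) :
        R × R × R × R) = (4 * x0, 4 * x1, 4 * x2, 4 * x3) := by
  ext <;> simp only <;> ring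

end TwistedMu4

/-- A point of the twisted μ4-normal form curve with parameters `(r,a)` maps
to the twisted Edwards curve with parameters `(−D, −16Dr)` in extended
coordinates, and the given inverse linear map recovers `4` times the point. -/
theorem twisted_mu4_to_twisted_edwards {R : Type*} [CommRing R] (r a : R)
    (x0 x1 x2 x3 : R)
    (h1 : x0 ^ 2 - (4 * a + 1) * r * x2 ^ 2 = x1 * x3 - a * (x1 - x3) ^ 2)
    (h2 : x1 ^ 2 - x3 ^ 2 = x0 * x2) :
    let D := 4 * a + 1
    let y0 := 4 * x0
    let y1 := 2 * (x1 - x3)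
    let y2 := 2 * (x1 + x3)
    let y3 := x2
    y0 ^ 2 - 16 * D * r * y3 ^ 2 = -D * y1 ^ 2 + y2 ^ 2 ∧
    y0 * y3 = y1 * y2 ∧
    ((y0, y1 + y2, 4 * y3, -y1 + y2) : R × R × R × R)
      = (4 * x0, 4 * x1, 4 * x2, 4 * x3) :=
  ⟨twistedEdwards_eq_of_twistedMu4_eq h1, extendedEdwards_rel_of_twistedMu4_rel h2,
    edwardsToMu4_mu4ToEdwards x0 x1 x2 x3⟩
end

section
/- Let R be a commutative ring of characteristic 2 and let a, b ∈ R. If (x0,x1,x2,x3) satisfies the binary twisted μ4-normal form equations with parameters (b,a), then the point (X, Y, Z) = (x1 + x3, x0 + x1, x2) satisfies the homogeneous Weierstrass equation Y²·Z + X·Y·Z = X³ + a·X²·Z + b·Z³. -/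
/-- Over a commutative ring of characteristic 2, a point of the binary twisted
μ4-normal form curve with parameters `(b,a)` maps to the homogeneous
Weierstrass curve `Y²Z + XYZ = X³ + aX²Z + bZ³`. -/
theorem binary_twisted_mu4_to_weierstrass {R : Type*} [CommRing R] [CharP R 2]
    (a b x0 x1 x2 x3 : R)
    (h1 : x0 ^ 2 + b * x2 ^ 2 = x1 * x3 + a * (x0 * x2))
    (h2 : x1 ^ 2 + x3 ^ 2 = x0 * x2) :
    let X := x1 + x3
    let Y := x0 + x1
    let Z := x2
    Y ^ 2 * Z + X * Y * Z = X ^ 3 + a * X ^ 2 * Z + b * Z ^ 3 := by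
  intro X Y Z
  -- Squaring is additive in characteristic 2, so `X² = x0 Z` and `X³` becomes linear in `X`;
  -- what is left is `Z` times the first curve equation, up to multiples of `2`.
  have hX : X ^ 2 = x0 * Z := (CharTwo.add_sq x1 x3).trans h2
  linear_combination Z * h1 - (X + a * Z) * hX +
    Z * (x0 * x1 + x1 ^ 2 + x1 * x3 - b * Z ^ 2) * (CharTwo.two_eq_zero : (2 : R) = 0)
end

section
/- Let R be a commutative ring and c ∈ R. Define σ((X,Z),(Y,W)) = (2·X·Y, c·(X·W + Z·Y), 2·Z·W, c·(Z·Y − X·W)). If (x0,x1,x2,x3) ∈ R⁴ satisfies x1² − x3² = c²·x0·x2 (the second equation of the twisted split μ4-normal form), then σ applied to the pair of projections ((c·x0, x1 + x3), (c·x0, x1 − x3)) equals (2c²·x0·x0, 2c²·x0·x1, 2c²·x0·x2, 2c²·x0·x3), i.e. the scalar 2c²·x0 times the original point; hence σ inverts the product of projections π1 × π2 to P¹ × P¹. -/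
/-- The map `σ((X:Z),(Y:W)) = (2XY : c(XW+ZY) : 2ZW : c(ZY−XW))` inverts the
product of projections `π1 × π2`: applied to the projections of a point
satisfying `x1² − x3² = c²·x0·x2`, it returns `2c²·x0` times the point. -/
theorem sigma_inverts_projections {R : Type*} [CommRing R] (c x0 x1 x2 x3 : R)
    (h : x1 ^ 2 - x3 ^ 2 = c ^ 2 * (x0 * x2)) :
    let X := c * x0
    let Z := x1 + x3
    let Y := c * x0
    let W := x1 - x3
    ((2 * (X * Y), c * (X * W + Z * Y), 2 * (Z * W), c * (Z * Y - X * W))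
        : R × R × R × R)
      = (2 * c ^ 2 * (x0 * x0), 2 * c ^ 2 * (x0 * x1),
         2 * c ^ 2 * (x0 * x2), 2 * c ^ 2 * (x0 * x3)) := by
  intro X Z Y W
  have hZW : Z * W = c ^ 2 * (x0 * x2) := by rw [← h]; ring
  simp only [Prod.mk.injEq]
  exact ⟨by ring, by ring, by rw [hZW]; ring, by ring⟩
end

section
/- Let k be a field of characteristic 2 and c, a ∈ k. If (x0,x1,x2,x3) satisfies the binary twisted split μ4-normal form equations with parameters (c,a), then evaluating the addition law s2 at the pair ((x0,x1,x2,x3), (c,1,0,1)) yields exactly (c²·x0·x0, c²·x0·x1, c²·x0·x2, c²·x0·x3), the scalar c²·x0 times the original point (so s2 normalizes the identity element O = (c,1,0,1)). -/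
theorem binary_s2_normalizes_identity_general {k : Type*} [Field k] [CharP k 2]
    (c a x0 x1 x2 x3 : k)
    (h2 : x1 ^ 2 + x3 ^ 2 = c ^ 2 * (x0 * x2)) :
    let U00 := x0 * c
    let U11 := x1 * 1
    let U22 := x2 * 0
    let U33 := x3 * 1
    let G := (x1 + x3) * (1 + 1) * (U00 + U22)
    (((U00 + U22) ^ 2, c * (U00 * U11 + U22 * U33 + a * G),
      (U11 + U33) ^ 2, c * (U00 * U33 + U11 * U22 + a * G)) : k × k × k × k)
      = (c ^ 2 * x0 * x0, c ^ 2 * x0 * x1, c ^ 2 * x0 * x2, c ^ 2 * x0 * x3) := by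
  intro U00 U11 U22 U33 G
  have hG : G = 0 := by
    simp only [G, CharTwo.add_self_eq_zero, mul_zero, zero_mul]
  have hsum : (U11 + U33) ^ 2 = c ^ 2 * x0 * x2 := by
    rw [CharTwo.add_sq, mul_assoc, ← h2]
    ring
  rw [hG, hsum]
  ext <;> simp only [U00, U11, U22, U33] <;> ring

/-- Over a field of characteristic 2, the binary addition law `s₂` evaluated at
a curve point and the identity `O = (c,1,0,1)` yields `c²·x0` times the point. -/
theorem binary_s2_normalizes_identity {k : Type*} [Field k] [CharP k 2]
    (c a x0 x1 x2 x3 : k)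
    (h1 : x0 ^ 2 + x2 ^ 2 = c ^ 2 * (x1 * x3 + a * (x1 + x3) ^ 2))
    (h2 : x1 ^ 2 + x3 ^ 2 = c ^ 2 * (x0 * x2)) :
    let U00 := x0 * c
    let U11 := x1 * 1
    let U22 := x2 * 0
    let U33 := x3 * 1
    let G := (x1 + x3) * (1 + 1) * (U00 + U22)
    (((U00 + U22) ^ 2, c * (U00 * U11 + U22 * U33 + a * G),
      (U11 + U33) ^ 2, c * (U00 * U33 + U11 * U22 + a * G)) : k × k × k × k)
      = (c ^ 2 * x0 * x0, c ^ 2 * x0 * x1, c ^ 2 * x0 * x2, c ^ 2 * x0 * x3) :=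
  binary_s2_normalizes_identity_general c a x0 x1 x2 x3 h2
end

section
/- Let k be a field of characteristic 2 and c ∈ k. Suppose P = (s0, s1, s2, s3) satisfies the split μ4-normal form equations with parameter c, and set (t0, t1) = (c·s0, s1 + s3), the image of P on the Kummer line. Then (t0², c·t0·t1, t1²) = (c²·s0·s0, c²·s0·(s1 + s3), c²·s0·s2); in particular, projectively (s0 : s1 + s3 : s2) = (t0² : c·t0·t1 : t1²), so the Montgomery-oriented curve associated to P depends only on the Kummer image of P. -/
theorem montgomery_curve_depends_on_kummer_general {k : Type*} [Field k] [CharP k 2]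
    (c s0 s1 s2 s3 : k)
    (h2 : s1 ^ 2 + s3 ^ 2 = c ^ 2 * (s0 * s2)) :
    let t0 := c * s0
    let t1 := s1 + s3
    ((t0 ^ 2, c * t0 * t1, t1 ^ 2) : k × k × k)
      = (c ^ 2 * (s0 * s0), c ^ 2 * (s0 * (s1 + s3)), c ^ 2 * (s0 * s2)) := by
  refine Prod.ext (by ring) (Prod.ext (by ring) ?_)
  show (s1 + s3) ^ 2 = c ^ 2 * (s0 * s2)
  rw [CharTwo.add_sq, h2]

/-- Over a field of characteristic 2, for a point `P = (s0,s1,s2,s3)` on the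
split μ4-normal form curve with Kummer image `(t0 : t1) = (c·s0 : s1 + s3)`,
the triple `(t0², c·t0·t1, t1²)` equals `c²·s0` times `(s0, s1 + s3, s2)`;
hence the Montgomery-oriented curve depends only on the Kummer image of `P`. -/
theorem montgomery_curve_depends_on_kummer {k : Type*} [Field k] [CharP k 2]
    (c s0 s1 s2 s3 : k)
    (h1 : s0 ^ 2 + s2 ^ 2 = c ^ 2 * (s1 * s3))
    (h2 : s1 ^ 2 + s3 ^ 2 = c ^ 2 * (s0 * s2)) :
    let t0 := c * s0
    let t1 := s1 + s3
    ((t0 ^ 2, c * t0 * t1, t1 ^ 2) : k × k × k)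
      = (c ^ 2 * (s0 * s0), c ^ 2 * (s0 * (s1 + s3)), c ^ 2 * (s0 * s2)) :=
  montgomery_curve_depends_on_kummer_general c s0 s1 s2 s3 h2
end

section
/- Let k be a field of characteristic 2 and c, a ∈ k. Suppose (s0, s1, s2, s3) and (x0, x1, x2, x3) both satisfy the binary twisted split μ4-normal form equations with parameters (c,a). Then (s0·x0 + s2·x2)·(s2·x0 + s0·x2) = (s1·x1 + s3·x3)·(s3·x1 + s1·x3); in particular the two defining expressions of the second projection π2∘λ of the Montgomery point-recovery map agree projectively on the curve. -/
/-!
Both sides are symmetric bilinear expressions in the squares: the left side equals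
`s0 s2 (x0² + x2²) + x0 x2 (s0² + s2²)` and the right side `s1 s3 (x1² + x3²) + x1 x3 (s1² + s3²)`.
Substituting the curve equations, the difference is `a c² (s0 s2 (x1 + x3)² + x0 x2 (s1 + s3)²)`,
and in characteristic 2 the second curve equation turns each square into `c²` times the other
point's `x0 x2`, so the two summands coincide and cancel.
-/

theorem mul_add_mul_mul_add_mul_swap {R : Type*} [CommRing R] (p q u v : R) :
    (p * u + q * v) * (q * u + p * v) = p * q * (u ^ 2 + v ^ 2) + u * v * (p ^ 2 + q ^ 2) := by
  ring

theorem add_sq_eq_of_sq_add_sq_eq {R : Type*} [CommSemiring R] [CharP R 2] {c x0 x1 x2 x3 : R}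
    (h : x1 ^ 2 + x3 ^ 2 = c ^ 2 * (x0 * x2)) : (x1 + x3) ^ 2 = c ^ 2 * (x0 * x2) := by
  rw [CharTwo.add_sq, h]

/-- Over a field of characteristic 2, for two points of the binary twisted
split μ4-normal form curve, the two defining expressions of the second
projection `π₂ ∘ λ` of the Montgomery point-recovery map agree projectively. -/
theorem montgomery_recovery_projections_agree {k : Type*} [Field k] [CharP k 2]
    (c a s0 s1 s2 s3 x0 x1 x2 x3 : k)
    (hs1 : s0 ^ 2 + s2 ^ 2 = c ^ 2 * (s1 * s3 + a * (s1 + s3) ^ 2))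
    (hs2 : s1 ^ 2 + s3 ^ 2 = c ^ 2 * (s0 * s2))
    (hx1 : x0 ^ 2 + x2 ^ 2 = c ^ 2 * (x1 * x3 + a * (x1 + x3) ^ 2))
    (hx2 : x1 ^ 2 + x3 ^ 2 = c ^ 2 * (x0 * x2)) :
    (s0 * x0 + s2 * x2) * (s2 * x0 + s0 * x2)
      = (s1 * x1 + s3 * x3) * (s3 * x1 + s1 * x3) := by
  have twist_terms_cancel : s0 * s2 * (x1 + x3) ^ 2 + x0 * x2 * (s1 + s3) ^ 2 = 0 := by
    rw [add_sq_eq_of_sq_add_sq_eq hx2, add_sq_eq_of_sq_add_sq_eq hs2]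
    linear_combination (c ^ 2 * s0 * s2 * x0 * x2) * CharTwo.two_eq_zero (R := k)
  rw [mul_add_mul_mul_add_mul_swap, mul_add_mul_mul_add_mul_swap, hx1, hs1, hx2, hs2]
  linear_combination (a * c ^ 2) * twist_terms_cancel
end
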